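/- In the fuzzy c-means membership optimization, for fixed positive distances d₁,…,d_c > 0 and fuzziness parameter m > 1, the minimizer of f(w) = Σ_{j=1}^c w_j^m d_j over the simplex {w ∈ ℝ^c : Σ w_j = 1, w_j ≥ 0} is given by w_j* = d_j^{-1/(m-1)} / Σ_{l=1}^c d_l^{-1/(m-1)}. -/

import Mathlib

open Finset

lemma bernoulli_rpow_aux {x y m : ℝ} (hy : 0 < y) (hx : 0 ≤ x) (hm : 1 ≤ m) :
    y ^ m + m * y ^ (m - 1) * (x - y) ≤ x ^ m := by
  have hs : -1 ≤ x / y - 1 := by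
    have : 0 ≤ x / y := div_nonneg hx hy.le
    linarith
  have hb := one_add_mul_self_le_rpow_one_add hs hm
  have h1 : (1 + (x / y - 1)) = x / y := by ring
  rw [h1] at hb
  have hym : (0:ℝ) < y ^ m := Real.rpow_pos_of_pos hy m
  have hmul := mul_le_mul_of_nonneg_right hb hym.le
  calc y ^ m + m * y ^ (m-1) * (x - y) = (1 + m * (x / y - 1)) * y ^ m := by
        have hy1 : y ^ (m - 1) = y ^ m / y := by
          rw [Real.rpow_sub hy, Real.rpow_one]
        rw [hy1]; field_simp
    _ ≤ (x / y) ^ m * y ^ m := hmul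
    _ = x ^ m := by
        rw [Real.div_rpow hx hy.le, div_mul_cancel₀]
        exact hym.ne'

/-- The closed-form FCM membership weights minimize the weighted objective over the simplex. -/
theorem fcm_membership_optimal (c : ℕ) (hc : 1 ≤ c) (m : ℝ) (hm : 1 < m)
    (d : Fin c → ℝ) (hd : ∀ j, 0 < d j)
    (w : Fin c → ℝ) (hw0 : ∀ j, 0 ≤ w j) (hw1 : ∑ j, w j = 1) :
    ∑ j, (d j ^ (-(1 / (m - 1))) / ∑ l, d l ^ (-(1 / (m - 1)))) ^ m * d j ≤
      ∑ j, w j ^ m * d j := by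
  have hm1 : (0:ℝ) < m - 1 := by linarith
  set e : ℝ := -(1 / (m - 1)) with he
  have hS : 0 < ∑ l, d l ^ e :=
    Finset.sum_pos (fun l _ => Real.rpow_pos_of_pos (hd l) e) ⟨⟨0, hc⟩, mem_univ _⟩
  set S : ℝ := ∑ l, d l ^ e with hSdef
  set ws : Fin c → ℝ := fun j => d j ^ e / S with hws
  have hwsp : ∀ j, 0 < ws j := fun j => div_pos (Real.rpow_pos_of_pos (hd j) e) hS
  have hws1 : ∑ j, ws j = 1 := by
    rw [hws]
    simp only [← Finset.sum_div]
    exact div_self hS.ne'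
  have hconst : ∀ j, (ws j) ^ (m - 1) * d j = S ^ (1 - m) := by
    intro j
    have hdj := hd j
    have h1 : (ws j) ^ (m - 1) = d j ^ (e * (m - 1)) / S ^ (m - 1) := by
      rw [hws]
      rw [Real.div_rpow (Real.rpow_pos_of_pos hdj e).le hS.le,
        ← Real.rpow_mul hdj.le]
    have h2 : e * (m - 1) = -1 := by
      rw [he]; field_simp
    rw [h1, h2, Real.rpow_neg_one]
    rw [div_mul_eq_mul_div, inv_mul_cancel₀ hdj.ne', one_div,
      ← Real.rpow_neg hS.le, neg_sub]
  have key : ∀ j, ws j ^ m * d j + m * S ^ (1 - m) * (w j - ws j) ≤ w j ^ m * d j := by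
    intro j
    have hb := bernoulli_rpow_aux (hwsp j) (hw0 j) hm.le
    have := mul_le_mul_of_nonneg_right hb (hd j).le
    calc ws j ^ m * d j + m * S ^ (1 - m) * (w j - ws j)
        = (ws j ^ m + m * ws j ^ (m - 1) * (w j - ws j)) * d j := by
          rw [← hconst j]; ring
      _ ≤ w j ^ m * d j := this
  calc ∑ j, ws j ^ m * d j
      = ∑ j, (ws j ^ m * d j + m * S ^ (1 - m) * (w j - ws j)) := by
        rw [Finset.sum_add_distrib, ← Finset.mul_sum, Finset.sum_sub_distrib, hw1, hws1]
        simp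
    _ ≤ ∑ j, w j ^ m * d j := Finset.sum_le_sum (fun j _ => key j)
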